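/- Cluster/truncation lemma for the CCR (sufficiency direction): Let W and W^T be families of multilinear functionals on test functions (indexed by labels a ∈ {in, loc, out}) related by the cluster expansion W(f₁,…,fₙ) = Σ_{partitions I of {1,…,n}} ∏_{{j₁<…<j_l} ∈ I} W^T(f_{j₁},…,f_{j_l}), with W^T vanishing on single arguments (one-point functions zero), and with two-point function W^T(f, h) for two out-labels satisfying W^T(f,h) − W^T(h,f) = i (b²/m²) D(f,h). Suppose that for all n ≥ 3, all positions k, and all labels, the antisymmetrization of W^T in two adjacent out-arguments vanishes: W^T(f₁,…,f_k, f_{k+1},…,fₙ) − W^T(f₁,…,f_{k+1}, f_k,…,fₙ) = 0. Then the full (non-truncated) functions satisfy W(f₁,…,f_k,f_{k+1},…,fₙ) − W(f₁,…,f_{k+1},f_k,…,fₙ) = i (b²/m²) D(f_k, f_{k+1}) · W(f₁,…,f_{k−1}, f_{k+2},…,fₙ) whenever positions k, k+1 carry the out-label. -/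

import Mathlib

open Finset
open scoped Classical

/-- Field labels: incoming, local and outgoing fields. -/
inductive Lab | inF | locF | outF
deriving DecidableEq

/-- `P` is a partition of `{0, …, n−1}` into disjoint nonempty blocks. -/
def IsPartition {n : ℕ} (P : Finset (Finset (Fin n))) : Prop :=
  (∅ ∉ P) ∧ ∀ i : Fin n, ∃! b : Finset (Fin n), b ∈ P ∧ i ∈ b

/-- Evaluation of a truncated functional `T` on a block `b` of a partition: the
elements of `b` are listed in increasing order and the corresponding labeled test
functions of the list `xs` are fed to `T`. -/
noncomputable def blockEval {𝒟 : Type*} (T : List (Lab × 𝒟) → ℂ)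
    (xs : List (Lab × 𝒟)) (b : Finset (Fin xs.length)) : ℂ :=
  T ((b.sort (· ≤ ·)).map xs.get)

/-! Expand both sides by the cluster expansion and sort the partitions `P` by how the adjacent
positions `k, k + 1` sit in `P`. If they lie in different blocks, exchanging the two arguments
amounts to relabelling `P` by the transposition `(k k+1)`, which keeps every block in increasing
order, so these terms of the two expansions agree after reindexing. If they lie in a common block
with at least three elements, the truncated function is symmetric in them and the terms agree one
by one. What remains are the partitions having `{k, k + 1}` as a block; they correspond to the
partitions of the other indices and produce the truncated two-point commutator times the cluster
expansion of the reduced function. -/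

section Order

variable {α : Type*} [LinearOrder α] {k k' : α}

theorem List.exists_eq_append_cons_cons_of_covBy (hk : k ⋖ k') :
    ∀ {l : List α}, l.Pairwise (· < ·) → k ∈ l → k' ∈ l → ∃ u v, l = u ++ k :: k' :: v
  | [], _, hkl, _ => absurd hkl List.not_mem_nil
  | a :: l, hl, hkl, hk'l => by
    rw [List.pairwise_cons] at hl
    rcases List.mem_cons.1 hkl with rfl | hkl
    · obtain ⟨b, v, rfl⟩ : ∃ b v, l = b :: v := List.exists_cons_of_ne_nil <| by
        rintro rfl; simp [hk.lt.ne'] at hk'l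
      have hb : k' ≤ b := hk.ge_of_gt (hl.1 b List.mem_cons_self)
      obtain rfl : b = k' := by
        rcases List.mem_cons.1 (List.mem_of_ne_of_mem hk.lt.ne' hk'l) with h | h
        · exact h.symm
        · exact absurd ((List.pairwise_cons.1 hl.2).1 k' h) hb.not_gt
      exact ⟨[], v, rfl⟩
    · have hak : a < k := hl.1 k hkl
      obtain ⟨u, v, rfl⟩ := exists_eq_append_cons_cons_of_covBy hk hl.2 hkl
        (List.mem_of_ne_of_mem (hak.trans hk.lt).ne' hk'l)
      exact ⟨a :: u, v, rfl⟩

theorem strictMonoOn_swap_of_covBy [DecidableEq α] (hk : k ⋖ k') {s : Set α}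
    (hs : ¬(k ∈ s ∧ k' ∈ s)) : StrictMonoOn (Equiv.swap k k') s := by
  intro x hx y hy hxy
  have hxy' : ¬(x = k ∧ y = k') := by rintro ⟨rfl, rfl⟩; exact hs ⟨hx, hy⟩
  have := hk.lt
  rcases (le_or_gt x k).imp_right hk.ge_of_gt with hx | hx <;>
    rcases (le_or_gt y k).imp_right hk.ge_of_gt with hy | hy <;>
    simp only [Equiv.swap_apply_def] <;> split_ifs <;> first | order | tauto

theorem Finset.sort_image_of_strictMonoOn {β : Type*} [LinearOrder β] [DecidableEq β]
    {g : α → β} {s : Finset α} (hg : StrictMonoOn g s) :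
    (s.image g).sort (· ≤ ·) = (s.sort (· ≤ ·)).map g := by
  refine (Finset.sortedLT_sort _).eq_of_mem_iff ?_ (by simp)
  refine List.Pairwise.sortedLT (List.pairwise_map.2 ?_)
  exact (Finset.sortedLT_sort s).pairwise.imp_of_mem fun ha hb hab =>
    hg (Finset.mem_sort _ |>.1 ha) (Finset.mem_sort _ |>.1 hb) hab

end Order

section Partition

variable {n m : ℕ} {P : Finset (Finset (Fin n))}

def SameBlock (P : Finset (Finset (Fin n))) (i j : Fin n) : Prop :=
  ∃ b ∈ P, i ∈ b ∧ j ∈ b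

theorem IsPartition.eq_of_mem (hP : IsPartition P) {b b' : Finset (Fin n)} (hb : b ∈ P)
    (hb' : b' ∈ P) {i : Fin n} (hib : i ∈ b) (hib' : i ∈ b') : b = b' :=
  (hP.2 i).unique ⟨hb, hib⟩ ⟨hb', hib'⟩

theorem IsPartition.disjoint (hP : IsPartition P) {b b' : Finset (Fin n)} (hb : b ∈ P)
    (hb' : b' ∈ P) (hne : b ≠ b') : Disjoint b b' :=
  Finset.disjoint_left.2 fun _ hib hib' => hne (hP.eq_of_mem hb hb' hib hib')

theorem IsPartition.image_perm (hP : IsPartition P) (σ : Equiv.Perm (Fin n)) :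
    IsPartition (P.image (Finset.image σ)) := by
  refine ⟨fun h => ?_, fun i => ?_⟩
  · obtain ⟨b, hb, hbe⟩ := Finset.mem_image.1 h
    exact hP.1 (Finset.image_eq_empty.1 hbe ▸ hb)
  · obtain ⟨b, ⟨hb, hib⟩, hbu⟩ := hP.2 (σ.symm i)
    refine ⟨b.image σ, ⟨Finset.mem_image_of_mem _ hb, by simpa [← Equiv.eq_symm_apply]⟩, ?_⟩
    rintro _ ⟨hc, hic⟩
    obtain ⟨b', hb', rfl⟩ := Finset.mem_image.1 hc
    rw [hbu b' ⟨hb', by simpa [← Equiv.eq_symm_apply] using hic⟩]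

variable {s : Finset (Fin n)} {e : Fin m → Fin n}

theorem IsPartition.insert_image (hs : s.Nonempty) (he : Function.Injective e)
    (hrange : ∀ i, i ∈ Set.range e ↔ i ∉ s) {Q : Finset (Finset (Fin m))} (hQ : IsPartition Q) :
    IsPartition (insert s (Q.image (Finset.image e))) := by
  refine ⟨fun h => ?_, fun i => ?_⟩
  · rcases Finset.mem_insert.1 h with h | h
    · exact hs.ne_empty h.symm
    · obtain ⟨b, hb, hbe⟩ := Finset.mem_image.1 h
      exact hQ.1 (Finset.image_eq_empty.1 hbe ▸ hb)
  by_cases his : i ∈ s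
  · refine ⟨s, ⟨Finset.mem_insert_self _ _, his⟩, ?_⟩
    rintro c ⟨hc, hic⟩
    rcases Finset.mem_insert.1 hc with rfl | hc
    · rfl
    · obtain ⟨b, -, rfl⟩ := Finset.mem_image.1 hc
      obtain ⟨j, -, rfl⟩ := Finset.mem_image.1 hic
      exact absurd his ((hrange _).1 ⟨j, rfl⟩)
  · obtain ⟨j, rfl⟩ := (hrange i).2 his
    obtain ⟨b, ⟨hb, hjb⟩, hbu⟩ := hQ.2 j
    refine ⟨b.image e, ⟨Finset.mem_insert_of_mem (Finset.mem_image_of_mem _ hb),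
      Finset.mem_image_of_mem _ hjb⟩, ?_⟩
    rintro c ⟨hc, hic⟩
    rcases Finset.mem_insert.1 hc with rfl | hc
    · exact absurd hic his
    · obtain ⟨b', hb', rfl⟩ := Finset.mem_image.1 hc
      rw [hbu b' ⟨hb', he.mem_finset_image.1 hic⟩]

theorem IsPartition.image_preimage_of_mem_erase (hP : IsPartition P) (hsP : s ∈ P)
    (he : Function.Injective e) (hrange : ∀ i, i ∈ Set.range e ↔ i ∉ s) {b : Finset (Fin n)}
    (hb : b ∈ P.erase s) : (b.preimage e he.injOn).image e = b :=
  (Finset.image_preimage _ _ _).trans <| Finset.filter_true_of_mem fun i hib =>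
    (hrange i).2 <| Finset.disjoint_left.1
      (hP.disjoint (Finset.mem_of_mem_erase hb) hsP (Finset.ne_of_mem_erase hb)) hib

theorem IsPartition.image_preimage_erase (hP : IsPartition P) (hsP : s ∈ P)
    (he : Function.Injective e) (hrange : ∀ i, i ∈ Set.range e ↔ i ∉ s) :
    IsPartition ((P.erase s).image fun b => b.preimage e he.injOn) := by
  refine ⟨fun h => ?_, fun j => ?_⟩
  · obtain ⟨b, hb, hbe⟩ := Finset.mem_image.1 h
    have := hP.image_preimage_of_mem_erase hsP he hrange hb
    rw [hbe, Finset.image_empty] at this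
    exact hP.1 (this ▸ Finset.mem_of_mem_erase hb)
  · obtain ⟨b, ⟨hb, hjb⟩, hbu⟩ := hP.2 (e j)
    have hbs : b ≠ s := fun h => ((hrange (e j)).1 ⟨j, rfl⟩) (h ▸ hjb)
    refine ⟨b.preimage e he.injOn,
      ⟨Finset.mem_image_of_mem _ (Finset.mem_erase.2 ⟨hbs, hb⟩), Finset.mem_preimage.2 hjb⟩, ?_⟩
    rintro _ ⟨hc, hjc⟩
    obtain ⟨b', hb', rfl⟩ := Finset.mem_image.1 hc
    rw [hbu b' ⟨Finset.mem_of_mem_erase hb', Finset.mem_preimage.1 hjc⟩]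

end Partition

section Cluster

variable {α : Type*} {n m : ℕ}

noncomputable def clusterTerm (T : List α → ℂ) (G : Fin n → α) (P : Finset (Finset (Fin n))) :
    ℂ :=
  ∏ b ∈ P, T ((b.sort (· ≤ ·)).map G)

noncomputable def clusterSum (T : List α → ℂ) (G : Fin n → α) : ℂ :=
  ∑ P ∈ Finset.univ.filter IsPartition, clusterTerm T G P

variable {T : List α → ℂ}

theorem clusterSum_congr_ofFn {G : Fin n → α} {G' : Fin m → α}
    (h : List.ofFn G = List.ofFn G') : clusterSum T G = clusterSum T G' := by
  cases List.ofFn_inj'.1 h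
  rfl

theorem clusterTerm_eq_mul_erase {G : Fin n → α} {P : Finset (Finset (Fin n))}
    {b : Finset (Fin n)} (hb : b ∈ P) :
    clusterTerm T G P = T ((b.sort (· ≤ ·)).map G) * clusterTerm T G (P.erase b) :=
  (Finset.mul_prod_erase P _ hb).symm

theorem clusterTerm_congr {G G' : Fin n → α} {P : Finset (Finset (Fin n))}
    (h : ∀ b ∈ P, ∀ i ∈ b, G i = G' i) : clusterTerm T G P = clusterTerm T G' P :=
  Finset.prod_congr rfl fun b hb =>
    congrArg T (List.map_congr_left fun i hi => h b hb i ((Finset.mem_sort _).1 hi))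

theorem clusterTerm_image {G : Fin n → α} {Q : Finset (Finset (Fin m))} {g : Fin m → Fin n}
    (hg : Function.Injective g) (hmono : ∀ b ∈ Q, StrictMonoOn g b) :
    clusterTerm T G (Q.image (Finset.image g)) = clusterTerm T (G ∘ g) Q := by
  rw [clusterTerm, Finset.prod_image fun _ _ _ _ h => Finset.image_injective hg h]
  refine Finset.prod_congr rfl fun b hb => ?_
  rw [Finset.sort_image_of_strictMonoOn (hmono b hb), List.map_map]

theorem sum_clusterTerm_erase_eq_clusterSum (G : Fin n → α) {s : Finset (Fin n)}
    (hs : s.Nonempty) {e : Fin m → Fin n} (he : StrictMono e)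
    (hrange : ∀ i, i ∈ Set.range e ↔ i ∉ s) :
    ∑ P ∈ (Finset.univ.filter IsPartition).filter (s ∈ ·), clusterTerm T G (P.erase s)
      = clusterSum T (G ∘ e) := by
  have hs_notMem : ∀ Q : Finset (Finset (Fin m)), s ∉ Q.image (Finset.image e) := by
    rintro Q h
    obtain ⟨b, -, rfl⟩ := Finset.mem_image.1 h
    obtain ⟨_, hi⟩ := hs
    obtain ⟨j, -, rfl⟩ := Finset.mem_image.1 hi
    exact (hrange _).1 ⟨j, rfl⟩ hi
  symm
  refine Finset.sum_nbij' (fun Q => insert s (Q.image (Finset.image e)))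
    (fun P => (P.erase s).image fun b => b.preimage e he.injective.injOn) ?_ ?_ ?_ ?_ ?_
  · intro Q hQ
    simp only [Finset.mem_filter, Finset.mem_univ, true_and] at hQ ⊢
    exact ⟨hQ.insert_image hs he.injective hrange, Finset.mem_insert_self _ _⟩
  · intro P hP
    simp only [Finset.mem_filter, Finset.mem_univ, true_and] at hP ⊢
    exact hP.1.image_preimage_erase hP.2 he.injective hrange
  · intro Q _
    rw [Finset.erase_insert (hs_notMem Q), Finset.image_image]
    refine (Finset.image_congr fun b _ => ?_).trans Finset.image_id
    ext
    simp [he.injective.eq_iff]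
  · intro P hP
    simp only [Finset.mem_filter, Finset.mem_univ, true_and] at hP
    rw [Finset.image_image]
    refine (congrArg _ ((Finset.image_congr fun b hb => ?_).trans Finset.image_id)).trans
      (Finset.insert_erase hP.2)
    exact hP.1.image_preimage_of_mem_erase hP.2 he.injective hrange hb
  · intro Q _
    rw [Finset.erase_insert (hs_notMem Q), clusterTerm_image he.injective
      fun b _ => he.strictMonoOn _]

end Cluster

section Transposition

variable {α : Type*} {n m : ℕ} {T : List α → ℂ} {G : Fin n → α} {k k' : Fin n}

theorem sum_clusterTerm_swap_of_not_sameBlock (hk : k ⋖ k') :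
    ∑ P ∈ (Finset.univ.filter IsPartition).filter (fun P => ¬SameBlock P k k'),
        clusterTerm T (G ∘ Equiv.swap k k') P
      = ∑ P ∈ (Finset.univ.filter IsPartition).filter (fun P => ¬SameBlock P k k'),
        clusterTerm T G P := by
  set σ := Equiv.swap k k'
  have hinvol : ∀ P : Finset (Finset (Fin n)),
      (P.image (Finset.image σ)).image (Finset.image σ) = P := fun P => by
    simp [Finset.image_image, Function.comp_def, σ, Equiv.swap_apply_self]
  have hmaps : ∀ P ∈ (Finset.univ.filter IsPartition).filter (fun P => ¬SameBlock P k k'),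
      P.image (Finset.image σ) ∈
        (Finset.univ.filter IsPartition).filter (fun P => ¬SameBlock P k k') := by
    intro P hP
    simp only [Finset.mem_filter, Finset.mem_univ, true_and] at hP ⊢
    refine ⟨hP.1.image_perm σ, fun ⟨_, hb', hkb, hk'b⟩ => ?_⟩
    obtain ⟨b, hb, rfl⟩ := Finset.mem_image.1 hb'
    exact hP.2 ⟨b, hb, by simpa [← Equiv.eq_symm_apply, σ] using hk'b,
      by simpa [← Equiv.eq_symm_apply, σ] using hkb⟩
  refine Finset.sum_nbij' (Finset.image (Finset.image σ)) (Finset.image (Finset.image σ))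
    hmaps hmaps (fun P _ => hinvol P) (fun P _ => hinvol P) fun P hP => ?_
  simp only [Finset.mem_filter] at hP
  exact (clusterTerm_image σ.injective fun b hb =>
    strictMonoOn_swap_of_covBy hk fun h => hP.2 ⟨b, hb, h⟩).symm

theorem sort_map_sub_sort_map_swap (hk : k ⋖ k') {b : Finset (Fin n)} (hkb : k ∈ b)
    (hk'b : k' ∈ b) (hsym : ∀ u v : List α, 1 ≤ u.length + v.length →
      T (u ++ [G k, G k'] ++ v) = T (u ++ [G k', G k] ++ v)) :
    T ((b.sort (· ≤ ·)).map G) - T ((b.sort (· ≤ ·)).map (G ∘ Equiv.swap k k'))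
      = if b = {k, k'} then T [G k, G k'] - T [G k', G k] else 0 := by
  obtain ⟨u, v, hsort⟩ := List.exists_eq_append_cons_cons_of_covBy hk
    (Finset.sortedLT_sort b).pairwise ((Finset.mem_sort _).2 hkb) ((Finset.mem_sort _).2 hk'b)
  have hnd := hsort ▸ Finset.sort_nodup b (· ≤ ·)
  simp only [List.nodup_middle, List.nodup_cons, List.mem_append, List.mem_cons] at hnd
  have hfix : ∀ i ∈ u ++ v, Equiv.swap k k' i = i := fun i hi =>
    Equiv.swap_apply_of_ne_of_ne (by rintro rfl; simp_all) (by rintro rfl; simp_all)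
  have hcard : b.card = u.length + v.length + 2 := by
    rw [← Finset.length_sort (· ≤ ·), hsort]; simp; omega
  have hmap : ∀ w, w ⊆ u ++ v → w.map (G ∘ Equiv.swap k k') = w.map G := fun w hw =>
    List.map_congr_left fun i hi => congrArg G (hfix i (hw hi))
  rw [hsort]
  simp only [List.map_append, List.map_cons, hmap u (List.subset_append_left u v),
    hmap v (List.subset_append_right u v), Function.comp_apply, Equiv.swap_apply_left,
    Equiv.swap_apply_right]
  split_ifs with hb
  · rw [hb, Finset.card_pair hk.lt.ne] at hcard
    obtain ⟨rfl, rfl⟩ : u = [] ∧ v = [] := by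
      constructor <;> (rw [← List.length_eq_zero_iff]; omega)
    rfl
  · have hlen : 1 ≤ u.length + v.length := by
      by_contra! hlen
      refine hb (Finset.eq_of_subset_of_card_le ?_ ?_).symm
      · exact Finset.insert_subset hkb (Finset.singleton_subset_iff.2 hk'b)
      · rw [Finset.card_pair hk.lt.ne]; omega
    have := hsym (u.map G) (v.map G) (by simpa using hlen)
    simp only [List.append_assoc, List.cons_append, List.nil_append] at this
    rw [this, sub_self]

theorem clusterTerm_sub_clusterTerm_swap_of_mem (hk : k ⋖ k') {P : Finset (Finset (Fin n))}
    (hP : IsPartition P) {b : Finset (Fin n)} (hb : b ∈ P) (hkb : k ∈ b) (hk'b : k' ∈ b)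
    (hsym : ∀ u v : List α, 1 ≤ u.length + v.length →
      T (u ++ [G k, G k'] ++ v) = T (u ++ [G k', G k] ++ v)) :
    clusterTerm T G P - clusterTerm T (G ∘ Equiv.swap k k') P
      = (if b = {k, k'} then T [G k, G k'] - T [G k', G k] else 0)
        * clusterTerm T G (P.erase b) := by
  have hrest : clusterTerm T (G ∘ Equiv.swap k k') (P.erase b) = clusterTerm T G (P.erase b) :=
    clusterTerm_congr fun c hc i hic => by
      have hbc := hP.disjoint (Finset.mem_of_mem_erase hc) hb (Finset.ne_of_mem_erase hc)
      rw [Function.comp_apply, Equiv.swap_apply_of_ne_of_ne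
        (by rintro rfl; exact Finset.disjoint_left.1 hbc hic hkb)
        (by rintro rfl; exact Finset.disjoint_left.1 hbc hic hk'b)]
  rw [clusterTerm_eq_mul_erase hb, clusterTerm_eq_mul_erase hb, hrest, ← sub_mul,
    sort_map_sub_sort_map_swap hk hkb hk'b hsym]

theorem sum_clusterTerm_sub_clusterTerm_swap_of_sameBlock (hk : k ⋖ k')
    (hsym : ∀ u v : List α, 1 ≤ u.length + v.length →
      T (u ++ [G k, G k'] ++ v) = T (u ++ [G k', G k] ++ v)) :
    ∑ P ∈ (Finset.univ.filter IsPartition).filter (SameBlock · k k'),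
        (clusterTerm T G P - clusterTerm T (G ∘ Equiv.swap k k') P)
      = (T [G k, G k'] - T [G k', G k]) * ∑ P ∈ (Finset.univ.filter IsPartition).filter
          (({k, k'} : Finset (Fin n)) ∈ ·), clusterTerm T G (P.erase {k, k'}) := by
  have hkk' : k ∈ ({k, k'} : Finset (Fin n)) ∧ k' ∈ ({k, k'} : Finset (Fin n)) := by simp
  rw [Finset.mul_sum, Finset.sum_filter (SameBlock · k k'),
    Finset.sum_filter (({k, k'} : Finset (Fin n)) ∈ ·)]
  refine Finset.sum_congr rfl fun P hP => ?_
  replace hP := (Finset.mem_filter.1 hP).2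
  split_ifs with htog hmem hmem
  · obtain ⟨b, hb, hkb, hk'b⟩ := htog
    obtain rfl := hP.eq_of_mem hmem hb hkk'.1 hkb
    rw [clusterTerm_sub_clusterTerm_swap_of_mem hk hP hb hkb hk'b hsym, if_pos rfl]
  · obtain ⟨b, hb, hkb, hk'b⟩ := htog
    rw [clusterTerm_sub_clusterTerm_swap_of_mem hk hP hb hkb hk'b hsym,
      if_neg fun h : b = {k, k'} => hmem (h ▸ hb), zero_mul]
  · exact absurd ⟨_, hmem, hkk'⟩ htog
  · rfl

theorem clusterSum_sub_clusterSum_swap (hk : k ⋖ k')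
    (hsym : ∀ u v : List α, 1 ≤ u.length + v.length →
      T (u ++ [G k, G k'] ++ v) = T (u ++ [G k', G k] ++ v))
    {e : Fin m → Fin n} (he : StrictMono e) (hrange : ∀ i, i ∈ Set.range e ↔ i ≠ k ∧ i ≠ k') :
    clusterSum T G - clusterSum T (G ∘ Equiv.swap k k')
      = (T [G k, G k'] - T [G k', G k]) * clusterSum T (G ∘ e) := by
  rw [← sum_clusterTerm_erase_eq_clusterSum G (Finset.insert_nonempty k {k'}) he
    (by simpa using hrange), ← sum_clusterTerm_sub_clusterTerm_swap_of_sameBlock hk hsym,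
    clusterSum, clusterSum,
    ← Finset.sum_filter_add_sum_filter_not _ (SameBlock · k k') (clusterTerm T G),
    ← Finset.sum_filter_add_sum_filter_not _ (SameBlock · k k')
      (clusterTerm T (G ∘ Equiv.swap k k')),
    sum_clusterTerm_swap_of_not_sameBlock hk, Finset.sum_sub_distrib]
  ring

end Transposition

section Lists

variable {α : Type*} (xs ys : List α) (p q : α)

theorem List.ofFn_get_comp_swap_append_pair :
    List.ofFn ((xs ++ [p, q] ++ ys).get ∘
      Equiv.swap ⟨xs.length, by simp⟩ ⟨xs.length + 1, by simp⟩) = xs ++ [q, p] ++ ys := by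
  refine List.ext_getElem (by simp; omega) fun i _ _ => ?_
  simp only [List.getElem_ofFn, Function.comp_apply, Equiv.swap_apply_def, Fin.ext_iff]
  grind

theorem List.exists_strictMono_ofFn_get_append_pair :
    ∃ e : Fin (xs.length + ys.length) → Fin (xs ++ [p, q] ++ ys).length, StrictMono e ∧
      (∀ i, i ∈ Set.range e ↔ (i : ℕ) ≠ xs.length ∧ (i : ℕ) ≠ xs.length + 1) ∧
      List.ofFn ((xs ++ [p, q] ++ ys).get ∘ e) = xs ++ ys := by
  refine ⟨fun j => ⟨if j < xs.length then j else j + 2, by simp; split_ifs <;> omega⟩,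
    fun a b h => ?_, fun i => ⟨?_, fun ⟨h₁, h₂⟩ => ?_⟩, ?_⟩
  · simp only [Fin.lt_def] at h ⊢
    split_ifs <;> omega
  · rintro ⟨j, rfl⟩
    dsimp only
    split_ifs <;> omega
  · by_cases hi : (i : ℕ) < xs.length
    · exact ⟨⟨i, by omega⟩, Fin.ext (by simp [hi])⟩
    · refine ⟨⟨i - 2, by have := i.isLt; simp at this; omega⟩, Fin.ext ?_⟩
      simp only [if_neg (show ¬(i : ℕ) - 2 < xs.length by omega)]
      omega
  · refine List.ext_getElem (by simp) fun i _ _ => ?_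
    simp only [List.getElem_ofFn, Function.comp_apply]
    grind

variable {T : List α → ℂ}

theorem clusterSum_append_pair_sub
    (hsym : ∀ u v : List α, 1 ≤ u.length + v.length →
      T (u ++ [p, q] ++ v) = T (u ++ [q, p] ++ v)) :
    clusterSum T (xs ++ [p, q] ++ ys).get - clusterSum T (xs ++ [q, p] ++ ys).get
      = (T [p, q] - T [q, p]) * clusterSum T (xs ++ ys).get := by
  set L := xs ++ [p, q] ++ ys
  obtain ⟨e, he, hrange, hofFn⟩ := List.exists_strictMono_ofFn_get_append_pair xs ys p q
  let k : Fin L.length := ⟨xs.length, by simp [L]⟩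
  let k' : Fin L.length := ⟨xs.length + 1, by simp [L]⟩
  have hGk : L.get k = p := by simp [L, k]
  have hGk' : L.get k' = q := by simp [L, k']
  rw [clusterSum_congr_ofFn (G := (xs ++ [q, p] ++ ys).get) (G' := L.get ∘ Equiv.swap k k')
      ((List.ofFn_get _).trans (List.ofFn_get_comp_swap_append_pair xs ys p q).symm),
    clusterSum_congr_ofFn (G := (xs ++ ys).get) (G' := L.get ∘ e)
      ((List.ofFn_get _).trans hofFn.symm), ← hGk, ← hGk']
  exact clusterSum_sub_clusterSum_swap (by simp [k, k']) (hGk ▸ hGk' ▸ hsym) he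
    (by simpa [Fin.ext_iff] using hrange)

end Lists

theorem stmt_13_general {𝒟 : Type*} (W T : List (Lab × 𝒟) → ℂ)
    (D : 𝒟 → 𝒟 → ℂ) (c : ℂ)
    -- cluster expansion relating W and the truncated functions T
    (hcluster : ∀ xs : List (Lab × 𝒟),
      W xs = ∑ P ∈ Finset.univ.filter (IsPartition (n := xs.length)),
        ∏ b ∈ P, blockEval T xs b)
    -- truncated two-point commutator for two out-arguments
    (htwo : ∀ f h : 𝒟,
      T [(Lab.outF, f), (Lab.outF, h)] - T [(Lab.outF, h), (Lab.outF, f)]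
        = c * D f h)
    -- for n ≥ 3, T is symmetric in two adjacent out-arguments
    (hsym : ∀ (xs ys : List (Lab × 𝒟)) (f h : 𝒟),
      1 ≤ xs.length + ys.length →
      T (xs ++ [(Lab.outF, f), (Lab.outF, h)] ++ ys)
        = T (xs ++ [(Lab.outF, h), (Lab.outF, f)] ++ ys)) :
    ∀ (xs ys : List (Lab × 𝒟)) (f h : 𝒟),
      W (xs ++ [(Lab.outF, f), (Lab.outF, h)] ++ ys)
          - W (xs ++ [(Lab.outF, h), (Lab.outF, f)] ++ ys)
        = c * D f h * W (xs ++ ys) := by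
  intro xs ys f h
  rw [hcluster, hcluster, hcluster, ← htwo]
  exact clusterSum_append_pair_sub xs ys _ _ (hsym · · f h)

/-- Lemma 5.1, sufficiency: let `W` and `Wᵀ` be families of
functionals on finite sequences of (in/loc/out)-labeled test functions related by
the cluster expansion, with vanishing truncated one-point functions, whose
truncated two-point function of two out-arguments has commutator `c • D(f,h)`
(`c = i b²/m²`, `D` the commutator function), and whose truncated `n`-point
functions (`n ≥ 3`) are symmetric in two adjacent out-arguments.  Then the full
`n`-point functions satisfy the CCR identity
`W(…, f_k, f_{k+1}, …) − W(…, f_{k+1}, f_k, …) = c · D(f_k, f_{k+1}) · W(…,…)`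
whenever positions `k, k+1` carry the out-label. -/
theorem stmt_13 {𝒟 : Type*} (W T : List (Lab × 𝒟) → ℂ)
    (D : 𝒟 → 𝒟 → ℂ) (c : ℂ)
    -- cluster expansion relating W and the truncated functions T
    (hcluster : ∀ xs : List (Lab × 𝒟),
      W xs = ∑ P ∈ Finset.univ.filter (IsPartition (n := xs.length)),
        ∏ b ∈ P, blockEval T xs b)
    -- truncated one-point functions vanish
    (hone : ∀ x : Lab × 𝒟, T [x] = 0)
    -- truncated two-point commutator for two out-arguments
    (htwo : ∀ f h : 𝒟,
      T [(Lab.outF, f), (Lab.outF, h)] - T [(Lab.outF, h), (Lab.outF, f)]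
        = c * D f h)
    -- for n ≥ 3, T is symmetric in two adjacent out-arguments
    (hsym : ∀ (xs ys : List (Lab × 𝒟)) (f h : 𝒟),
      1 ≤ xs.length + ys.length →
      T (xs ++ [(Lab.outF, f), (Lab.outF, h)] ++ ys)
        = T (xs ++ [(Lab.outF, h), (Lab.outF, f)] ++ ys)) :
    ∀ (xs ys : List (Lab × 𝒟)) (f h : 𝒟),
      W (xs ++ [(Lab.outF, f), (Lab.outF, h)] ++ ys)
          - W (xs ++ [(Lab.outF, h), (Lab.outF, f)] ++ ys)
        = c * D f h * W (xs ++ ys) :=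
  stmt_13_general W T D c hcluster htwo hsym
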